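/- Let $\mathcal{P}$ be a non-empty finite set of odd primes and let $k \in \mathbb{N}$, $k > 1$, be a product of prime powers with primes from $\mathcal{P}$. Let $m$ be a power of $2$. Suppose that for each $p \in \mathcal{P}$ there exists a real number $c(p)$ with $1 < c(p) < p$, depending only on $p$, such that $s((\mathbb{Z}_p)^n) \leq c(p)^n (p-1) + 1$ for each $n \geq 1$. Then there exists a real number $c(k)$ with $1 < c(k) < k$, depending only on $k$, such that for every $n \geq 1$, $s((\mathbb{Z}_{mk})^n) \leq 2^n (m-1) k + c(k)^n (k-1) + 1$. -/

import Mathlib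

/-- The Erdős–Ginzburg–Ziv constant `s(A)`: the smallest `ℓ ∈ ℕ` such that every
multiset `S` over `A` of length `≥ ℓ` has a zero-sum sub-multiset of length `exp(A)`. -/
noncomputable def EGZ (A : Type) [AddCommGroup A] : ℕ :=
  sInf {ℓ : ℕ | ∀ S : Multiset A, ℓ ≤ Multiset.card S →
    ∃ T ≤ S, Multiset.card T = AddMonoid.exponent A ∧ T.sum = 0}

/-!
If `H ≤ G` and `exp G = exp H * exp (G ⧸ H)`, then among `exp (G ⧸ H) * (s(H) - 1) + s(G ⧸ H)`
terms of `G` one can greedily pick `s(H)` disjoint blocks of length `exp (G ⧸ H)` whose sums lie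
in `H`; the EGZ property of `H` applied to these block sums selects `exp H` of the blocks, which
together form a zero-sum subsequence of length `exp G`. For `G = ℤ_{ab}ⁿ` and `H = a G ≅ ℤ_bⁿ`
this gives `s(ℤ_{ab}ⁿ) ≤ a (s(ℤ_bⁿ) - 1) + s(ℤ_aⁿ)`.

Iterating over the prime factors of `k` shows that the largest `c(p)` works as `c(k)`. Iterating
with `a = 2`, starting from the pigeonhole bound `s(ℤ_2ⁿ) ≤ 2ⁿ + 1`, gives
`s(ℤ_mⁿ) ≤ (m - 1) 2ⁿ + 1`, and one last application with `a = k`, `b = m` combines the two.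
-/

open Multiset

theorem Multiset.exists_le_map_eq_of_le_map {α β : Type*} {f : α → β} {s : Multiset α}
    {t : Multiset β} (h : t ≤ s.map f) : ∃ u ≤ s, u.map f = t := by
  induction s using Quotient.inductionOn
  induction t using Quotient.inductionOn
  obtain ⟨l, hperm, hsub⟩ := coe_le.1 h
  obtain ⟨l₀, hsub₀, rfl⟩ := List.sublist_map_iff.1 hsub
  exact ⟨l₀, coe_le.2 hsub₀.subperm, Quotient.sound hperm⟩

theorem Multiset.join_le_join {α : Type*} {S T : Multiset (Multiset α)} (h : S ≤ T) :
    S.join ≤ T.join := by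
  obtain ⟨U, rfl⟩ := Multiset.le_iff_exists_add.1 h
  rw [Multiset.join_add]
  exact Multiset.le_add_right _ _

theorem AddMonoid.exponent_pi_const {ι M : Type*} [Fintype ι] [Nonempty ι] [AddMonoid M] :
    AddMonoid.exponent (ι → M) = AddMonoid.exponent M := by
  refine Nat.dvd_antisymm ?_ ?_
  · rw [AddMonoid.exponent_pi]
    exact Finset.lcm_dvd fun _ _ => dvd_rfl
  · let i : ι := Classical.arbitrary ι
    exact AddMonoidHom.exponent_dvd (f := Pi.evalAddMonoidHom (fun _ => M) i)
      (Function.surjective_eval i)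

/-- `EGZ G` is the least `ℓ` with `IsEGZBound G (AddMonoid.exponent G) ℓ`. -/
def IsEGZBound (G : Type*) [AddCommMonoid G] (N ℓ : ℕ) : Prop :=
  ∀ S : Multiset G, ℓ ≤ card S → ∃ T ≤ S, card T = N ∧ T.sum = 0

namespace IsEGZBound

variable {G : Type*} [AddCommMonoid G] {N ℓ : ℕ}

theorem one_le (hN : N ≠ 0) (h : IsEGZBound G N ℓ) : 1 ≤ ℓ := by
  by_contra! hℓ
  obtain ⟨T, hT, hTcard, -⟩ := h 0 (by omega)
  rw [Multiset.le_zero.1 hT, card_zero] at hTcard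
  exact hN hTcard.symm

theorem of_card [Fintype G] (hN : ∀ g : G, N • g = 0) :
    IsEGZBound G N ((N - 1) * Fintype.card G + 1) := by
  classical
  intro S hS
  obtain ⟨g, hg⟩ : ∃ g, N ≤ S.count g := by
    by_contra! hcount
    have : card S ≤ Fintype.card G * (N - 1) := by
      rw [← Multiset.toFinset_sum_count_eq]
      calc ∑ g ∈ S.toFinset, S.count g ≤ S.toFinset.card * (N - 1) :=
            Finset.sum_le_card_nsmul _ _ _ fun g _ => by have := hcount g; omega
        _ ≤ Fintype.card G * (N - 1) := Nat.mul_le_mul_right _ (Finset.card_le_univ _)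
    rw [mul_comm] at this
    omega
  exact ⟨replicate N g, Multiset.le_count_iff_replicate_le.1 hg, card_replicate N g,
    by rw [sum_replicate, hN]⟩

variable {Q : Type*} [AddCommMonoid Q] {a ℓa : ℕ}

theorem exists_blocks (φ : G →+ Q) (hQ : IsEGZBound Q a ℓa) :
    ∀ (t : ℕ) (S : Multiset G), a * t + ℓa ≤ card S + a →
      ∃ B : Multiset (Multiset G), card B = t ∧ B.join ≤ S ∧
        ∀ T ∈ B, card T = a ∧ φ T.sum = 0 := by
  intro t
  induction t with
  | zero => exact fun _ _ => ⟨0, rfl, by simp, by simp⟩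
  | succ t ih =>
    classical
    intro S hS
    rw [Nat.mul_succ] at hS
    obtain ⟨T', hT'S, hT'card, hT'sum⟩ := hQ (S.map φ) (by rw [card_map]; omega)
    obtain ⟨T, hTS, rfl⟩ := Multiset.exists_le_map_eq_of_le_map hT'S
    rw [card_map] at hT'card
    have hTcard := card_le_card hTS
    obtain ⟨B, hBcard, hBS, hB⟩ := ih (S - T) (by rw [Multiset.card_sub hTS]; omega)
    refine ⟨T ::ₘ B, by rw [card_cons, hBcard], ?_, ?_⟩
    · calc (T ::ₘ B).join = T + B.join := Multiset.join_cons T B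
        _ ≤ T + (S - T) := by gcongr
        _ = S := add_tsub_cancel_of_le hTS
    · rintro U hU
      rcases Multiset.mem_cons.1 hU with rfl | hU
      · exact ⟨hT'card, by rw [map_multiset_sum, hT'sum]⟩
      · exact hB U hU

theorem of_exact {H : Type*} [AddCommMonoid H] {b ℓb : ℕ} (φ : G →+ Q) (ι : H →+ G)
    (hexact : ∀ g, φ g = 0 → ∃ h, ι h = g) (hQ : IsEGZBound Q a ℓa)
    (hH : IsEGZBound H b ℓb) : IsEGZBound G (a * b) (a * (ℓb - 1) + ℓa) := by
  choose! σ hσ using hexact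
  intro S hS
  obtain ⟨B, hBcard, hBS, hB⟩ := exists_blocks φ hQ ℓb S (by
    rcases ℓb with _ | ℓb
    · omega
    · rw [Nat.mul_succ]; simp only [Nat.add_sub_cancel] at hS; omega)
  obtain ⟨U, hUB, hUcard, hUsum⟩ :=
    hH (B.map (σ ∘ Multiset.sum)) (by rw [card_map, hBcard])
  obtain ⟨C, hCB, rfl⟩ := Multiset.exists_le_map_eq_of_le_map hUB
  rw [card_map] at hUcard
  have hCblock : ∀ T ∈ C, card T = a ∧ φ T.sum = 0 := fun T hT => hB T (mem_of_le hCB hT)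
  refine ⟨C.join, (Multiset.join_le_join hCB).trans hBS, ?_, ?_⟩
  · rw [card_join, Multiset.map_congr rfl fun T hT => (hCblock T hT).1, map_const',
      sum_replicate, smul_eq_mul, hUcard, mul_comm]
  · rw [Multiset.sum_join, Multiset.map_congr rfl fun T hT => (hσ _ (hCblock T hT).2).symm]
    simpa [Multiset.map_map, map_multiset_sum] using congrArg ι hUsum

end IsEGZBound

section EGZ

variable {G : Type} [AddCommGroup G]

theorem EGZ_le_of_isEGZBound {ℓ : ℕ} (h : IsEGZBound G (AddMonoid.exponent G) ℓ) :
    EGZ G ≤ ℓ :=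
  Nat.sInf_le h

theorem EGZ_le_exponent_mul_card [Fintype G] :
    EGZ G ≤ (AddMonoid.exponent G - 1) * Fintype.card G + 1 :=
  EGZ_le_of_isEGZBound (IsEGZBound.of_card AddMonoid.exponent_nsmul_eq_zero)

theorem isEGZBound_EGZ [Finite G] : IsEGZBound G (AddMonoid.exponent G) (EGZ G) := by
  have := Fintype.ofFinite G
  exact Nat.sInf_mem (s := {ℓ | IsEGZBound G (AddMonoid.exponent G) ℓ})
    ⟨_, IsEGZBound.of_card AddMonoid.exponent_nsmul_eq_zero⟩

theorem one_le_EGZ [Finite G] : 1 ≤ EGZ G :=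
  isEGZBound_EGZ.one_le AddMonoid.exponent_ne_zero_of_finite

end EGZ

namespace ZMod

/-- Multiplication by `a`; its image is the kernel of the reduction `ZMod (a * b) → ZMod a`. -/
def mulLeftHom (a b : ℕ) : ZMod b →+ ZMod (a * b) :=
  ZMod.lift b ⟨zmultiplesHom _ (a : ZMod (a * b)), by
    simp only [zmultiplesHom_apply, natCast_zsmul, nsmul_eq_mul]
    rw [← Nat.cast_mul]
    exact (ZMod.natCast_eq_zero_iff _ _).2 (mul_comm a b).dvd⟩

theorem mulLeftHom_intCast (a b : ℕ) (z : ℤ) : mulLeftHom a b z = z * a := by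
  simp [mulLeftHom]

theorem exists_mulLeftHom_eq_of_castHom_eq_zero {a b : ℕ} {x : ZMod (a * b)}
    (hx : ZMod.castHom (dvd_mul_right a b) (ZMod a) x = 0) : ∃ y, mulLeftHom a b y = x := by
  obtain ⟨z, rfl⟩ := ZMod.intCast_surjective x
  rw [map_intCast, ZMod.intCast_zmod_eq_zero_iff_dvd] at hx
  obtain ⟨c, rfl⟩ := hx
  exact ⟨c, by rw [mulLeftHom_intCast]; push_cast; ring⟩

end ZMod

section PiZMod

variable (n : ℕ) [NeZero n]

theorem exponent_fin_pi_zmod (N : ℕ) : AddMonoid.exponent (Fin n → ZMod N) = N := by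
  rw [AddMonoid.exponent_pi_const, ZMod.exponent]

theorem EGZ_pi_zmod_mul_le (a b : ℕ) [NeZero a] [NeZero b] :
    EGZ (Fin n → ZMod (a * b)) ≤ a * (EGZ (Fin n → ZMod b) - 1) + EGZ (Fin n → ZMod a) := by
  apply EGZ_le_of_isEGZBound
  have hQ := isEGZBound_EGZ (G := Fin n → ZMod a)
  have hH := isEGZBound_EGZ (G := Fin n → ZMod b)
  rw [exponent_fin_pi_zmod] at hQ hH ⊢
  refine IsEGZBound.of_exact
    ((ZMod.castHom (dvd_mul_right a b) (ZMod a)).toAddMonoidHom.compLeft (Fin n))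
    ((ZMod.mulLeftHom a b).compLeft (Fin n)) (fun g hg => ?_) hQ hH
  choose h hh using fun i => ZMod.exists_mulLeftHom_eq_of_castHom_eq_zero (congrFun hg i)
  exact ⟨h, funext hh⟩

theorem EGZ_pi_zmod_two_pow_le (a : ℕ) :
    EGZ (Fin n → ZMod (2 ^ a)) ≤ (2 ^ a - 1) * 2 ^ n + 1 := by
  induction a with
  | zero =>
    simpa [exponent_fin_pi_zmod] using EGZ_le_exponent_mul_card (G := Fin n → ZMod 1)
  | succ a ih =>
    have h2 : EGZ (Fin n → ZMod 2) ≤ 2 ^ n + 1 := by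
      simpa [exponent_fin_pi_zmod] using EGZ_le_exponent_mul_card (G := Fin n → ZMod 2)
    have hsplit : 2 * 2 ^ a - 1 = 2 * (2 ^ a - 1) + 1 := by
      have := Nat.one_le_two_pow (n := a)
      omega
    rw [pow_succ', hsplit]
    calc EGZ (Fin n → ZMod (2 * 2 ^ a)) ≤ 2 * (EGZ (Fin n → ZMod (2 ^ a)) - 1)
          + EGZ (Fin n → ZMod 2) := EGZ_pi_zmod_mul_le n 2 (2 ^ a)
      _ ≤ 2 * ((2 ^ a - 1) * 2 ^ n) + (2 ^ n + 1) := by gcongr; omega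
      _ = (2 * (2 ^ a - 1) + 1) * 2 ^ n + 1 := by ring

end PiZMod

def HasEGZGrowth (k : ℕ) (c : ℝ) : Prop :=
  1 < c ∧ c < k ∧ ∀ n : ℕ, 1 ≤ n →
    (EGZ (Fin n → ZMod k) : ℝ) ≤ c ^ n * ((k : ℝ) - 1) + 1

theorem HasEGZGrowth.mul {a b : ℕ} {ca cb : ℝ} (ha : HasEGZGrowth a ca)
    (hb : HasEGZGrowth b cb) : HasEGZGrowth (a * b) (max ca cb) := by
  obtain ⟨hca1, hcaa, haE⟩ := ha
  obtain ⟨hcb1, hcbb, hbE⟩ := hb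
  have ha1 : (1 : ℝ) < a := hca1.trans hcaa
  have hb1 : (1 : ℝ) < b := hcb1.trans hcbb
  have : NeZero a := ⟨by rintro rfl; norm_num at ha1⟩
  have : NeZero b := ⟨by rintro rfl; norm_num at hb1⟩
  refine ⟨lt_max_of_lt_left hca1, max_lt ?_ ?_, fun n hn => ?_⟩
  · push_cast; nlinarith
  · push_cast; nlinarith
  have : NeZero n := ⟨by omega⟩
  set c := max ca cb
  have hEb : 1 ≤ EGZ (Fin n → ZMod b) := one_le_EGZ
  have hcast : (EGZ (Fin n → ZMod (a * b)) : ℝ)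
      ≤ a * ((EGZ (Fin n → ZMod b) : ℝ) - 1) + EGZ (Fin n → ZMod a) := by
    rw [← Nat.cast_one, ← Nat.cast_sub hEb]
    exact_mod_cast EGZ_pi_zmod_mul_le n a b
  have hcan : ca ^ n ≤ c ^ n := pow_le_pow_left₀ (by linarith) (le_max_left _ _) n
  have hcbn : cb ^ n ≤ c ^ n := pow_le_pow_left₀ (by linarith) (le_max_right _ _) n
  calc (EGZ (Fin n → ZMod (a * b)) : ℝ)
      ≤ a * ((EGZ (Fin n → ZMod b) : ℝ) - 1) + EGZ (Fin n → ZMod a) := hcast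
    _ ≤ a * (cb ^ n * ((b : ℝ) - 1)) + (ca ^ n * ((a : ℝ) - 1) + 1) := by
      gcongr
      · linarith [hbE n hn]
      · exact haE n hn
    _ ≤ a * (c ^ n * ((b : ℝ) - 1)) + (c ^ n * ((a : ℝ) - 1) + 1) := by
      gcongr
    _ = c ^ n * (((a * b : ℕ) : ℝ) - 1) + 1 := by push_cast; ring

theorem exists_hasEGZGrowth {P : Finset ℕ} (hP : ∀ p ∈ P, ∃ c, HasEGZGrowth p c) {k : ℕ}
    (hk : 1 < k) (hkP : ∀ p : ℕ, p.Prime → p ∣ k → p ∈ P) : ∃ c, HasEGZGrowth k c := by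
  suffices ∀ k, 0 < k → (∀ p : ℕ, p.Prime → p ∣ k → p ∈ P) → k = 1 ∨ ∃ c, HasEGZGrowth k c by
    exact (this k (by omega) hkP).resolve_left hk.ne'
  intro k
  induction k using Nat.recOnMul with
  | zero => intro h; omega
  | one => exact fun _ _ => Or.inl rfl
  | prime p hp => exact fun _ hpP => Or.inr (hP p (hpP p hp dvd_rfl))
  | mul a b iha ihb =>
    intro hab habP
    have ha := iha (Nat.pos_of_mul_pos_right hab) fun p hp hpa => habP p hp (hpa.mul_right b)
    have hb := ihb (Nat.pos_of_mul_pos_left hab) fun p hp hpb => habP p hp (hpb.mul_left a)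
    rcases ha with rfl | ⟨ca, hca⟩
    · simpa using hb
    rcases hb with rfl | ⟨cb, hcb⟩
    · simpa using Or.inr ⟨ca, hca⟩
    exact Or.inr ⟨_, hca.mul hcb⟩

theorem egz_composite_upper_general (P : Finset ℕ)
    (k : ℕ) (hk1 : 1 < k) (hkP : ∀ p : ℕ, p.Prime → p ∣ k → p ∈ P)
    (m : ℕ) (hm : ∃ a : ℕ, m = 2 ^ a)
    (hc : ∀ p ∈ P, ∃ c : ℝ, 1 < c ∧ c < p ∧ ∀ n : ℕ, 1 ≤ n →
      (EGZ (Fin n → ZMod p) : ℝ) ≤ c ^ n * ((p : ℝ) - 1) + 1) :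
    ∃ ck : ℝ, 1 < ck ∧ ck < k ∧ ∀ n : ℕ, 1 ≤ n →
      (EGZ (Fin n → ZMod (m * k)) : ℝ) ≤
        2 ^ n * ((m : ℝ) - 1) * k + ck ^ n * ((k : ℝ) - 1) + 1 := by
  obtain ⟨ck, hck1, hckk, hbound⟩ := exists_hasEGZGrowth hc hk1 hkP
  obtain ⟨a, rfl⟩ := hm
  refine ⟨ck, hck1, hckk, fun n hn => ?_⟩
  have : NeZero n := ⟨by omega⟩
  have : NeZero k := ⟨by omega⟩
  have hmk :
      EGZ (Fin n → ZMod (2 ^ a * k)) ≤ k * ((2 ^ a - 1) * 2 ^ n) + EGZ (Fin n → ZMod k) := by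
    rw [mul_comm]
    have := EGZ_pi_zmod_two_pow_le n a
    exact (EGZ_pi_zmod_mul_le n k (2 ^ a)).trans (by gcongr; omega)
  have hcast : (EGZ (Fin n → ZMod (2 ^ a * k)) : ℝ)
      ≤ k * ((2 ^ a - 1) * 2 ^ n) + EGZ (Fin n → ZMod k) := by
    have := Nat.one_le_two_pow (n := a)
    exact_mod_cast hmk
  push_cast
  linarith [hbound n hn]

theorem egz_composite_upper (P : Finset ℕ) (hP : P.Nonempty)
    (hPodd : ∀ p ∈ P, Nat.Prime p ∧ Odd p)
    (k : ℕ) (hk1 : 1 < k) (hkP : ∀ p : ℕ, p.Prime → p ∣ k → p ∈ P)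
    (m : ℕ) (hm : ∃ a : ℕ, m = 2 ^ a)
    (hc : ∀ p ∈ P, ∃ c : ℝ, 1 < c ∧ c < p ∧ ∀ n : ℕ, 1 ≤ n →
      (EGZ (Fin n → ZMod p) : ℝ) ≤ c ^ n * ((p : ℝ) - 1) + 1) :
    ∃ ck : ℝ, 1 < ck ∧ ck < k ∧ ∀ n : ℕ, 1 ≤ n →
      (EGZ (Fin n → ZMod (m * k)) : ℝ) ≤
        2 ^ n * ((m : ℝ) - 1) * k + ck ^ n * ((k : ℝ) - 1) + 1 :=
  egz_composite_upper_general P k hk1 hkP m hm hc
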